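/- arXiv:1103.5687 — 2 statements merged into one kernel-verified Lean document; each statement's English description precedes it below -/
import Mathlib

section
/- Let m ≥ 2, n ≥ m, let Ω ⊆ ℝ^m be open and connected, let f : Ω → (0,∞) be smooth, and let φ : Ω → ℝ^n be a smooth conformal immersion: there is a smooth λ : Ω → (0,∞) with ⟨∂φ/∂x^i (x), ∂φ/∂x^j (x)⟩ = λ(x)²·δ_{ij} for all x ∈ Ω and 1 ≤ i, j ≤ m. Then φ is an f-harmonic map (i.e., f(x)·Δφ(x) + Dφ_x(∇f(x)) = 0 for all x, where Δφ = (Δφ¹,…,Δφⁿ)) if and only if φ is a minimal immersion — meaning that for every x ∈ Ω the vector Δφ(x) lies in the tangent space Dφ_x(ℝ^m), equivalently the mean curvature vector of the immersed submanifold vanishes — and there exists a constant C > 0 such that f = C·λ^{m−2} on Ω. -/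
open scoped RealInnerProductSpace

/-- The componentwise Euclidean Laplacian of a map `ℝ^m → ℝ^n`. -/
noncomputable def lapV {m n : ℕ}
    (φ : EuclideanSpace ℝ (Fin m) → EuclideanSpace ℝ (Fin n))
    (x : EuclideanSpace ℝ (Fin m)) : EuclideanSpace ℝ (Fin n) :=
  ∑ i : Fin m, fderiv ℝ (fun y => fderiv ℝ φ y (EuclideanSpace.single i 1)) x
    (EuclideanSpace.single i 1)

private lemma euclid_decomp {m : ℕ} (v : EuclideanSpace ℝ (Fin m)) :
    v = ∑ i : Fin m, v i • EuclideanSpace.single i (1:ℝ) := by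
  ext j
  rw [WithLp.ofLp_sum, Finset.sum_apply]
  simp [EuclideanSpace.single_apply]

private lemma clm_decomp {m : ℕ} {F : Type*} [NormedAddCommGroup F] [NormedSpace ℝ F]
    (T : EuclideanSpace ℝ (Fin m) →L[ℝ] F) (v : EuclideanSpace ℝ (Fin m)) :
    T v = ∑ i : Fin m, v i • T (EuclideanSpace.single i (1:ℝ)) := by
  conv_lhs => rw [euclid_decomp v]
  rw [map_sum]
  simp

private lemma clm_ext_zero {m : ℕ} {T : EuclideanSpace ℝ (Fin m) →L[ℝ] ℝ}
    (h : ∀ i, T (EuclideanSpace.single i 1) = 0) : T = 0 := by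
  ext v
  rw [clm_decomp]
  simp [h]

private lemma hasFDerivAt_npow {E : Type*} [NormedAddCommGroup E] [NormedSpace ℝ E]
    {g : E → ℝ} {g' : E →L[ℝ] ℝ} {x : E} (h : HasFDerivAt g g' x) (p : ℕ) :
    HasFDerivAt (fun y => g y ^ p) (((p : ℝ) * g x ^ (p - 1)) • g') x := by
  induction p with
  | zero => simpa using hasFDerivAt_const (1:ℝ) x
  | succ p ih =>
    have h2 := ih.mul h
    have hfun : (fun y => g y ^ p * g y) = fun y => g y ^ (p+1) := by
      funext y; rw [← pow_succ]
    change HasFDerivAt (fun y => g y ^ p * g y) _ x at h2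
    rw [hfun] at h2
    refine HasFDerivAt.congr_fderiv h2 (Eq.symm ?_)
    rw [smul_smul, ← add_smul]
    congr 1
    rcases Nat.eq_zero_or_pos p with hp | hp
    · subst hp; simp
    · have hgp : g x * g x ^ (p-1) = g x ^ p := by
        rw [← pow_succ']; congr 1; omega
      push_cast
      rw [show g x * ((p:ℝ) * g x ^ (p-1)) = (p:ℝ) * (g x * g x ^ (p-1)) from by ring, hgp]
      ring

private lemma const_of_locally_const {α β : Type*} [TopologicalSpace α]
    {Ω : Set α} (hΩc : IsPreconnected Ω) {q : α → β}
    (hloc : ∀ x ∈ Ω, ∀ᶠ y in nhds x, q y = q x) {x₀ : α} (hx₀ : x₀ ∈ Ω) :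
    ∀ y ∈ Ω, q y = q x₀ := by
  by_contra hcon
  push_neg at hcon
  obtain ⟨y, hy, hqy⟩ := hcon
  set U : Set α := {z | ∀ᶠ w in nhds z, q w = q x₀} with hU
  set V : Set α := {z | ∀ᶠ w in nhds z, q w ≠ q x₀} with hV
  have hUo : IsOpen U := isOpen_setOf_eventually_nhds
  have hVo : IsOpen V := isOpen_setOf_eventually_nhds
  have hsub : Ω ⊆ U ∪ V := by
    intro z hz
    by_cases h : q z = q x₀
    · left; filter_upwards [hloc z hz] with w hw; rw [hw, h]
    · right; filter_upwards [hloc z hz] with w hw; rw [hw]; exact h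
  have h1 : (Ω ∩ U).Nonempty := ⟨x₀, hx₀, by filter_upwards [hloc x₀ hx₀] with w hw; exact hw⟩
  have h2 : (Ω ∩ V).Nonempty :=
    ⟨y, hy, by filter_upwards [hloc y hy] with w hw; rw [hw]; exact hqy⟩
  obtain ⟨z, -, hzU, hzV⟩ := hΩc U V hUo hVo hsub h1 h2
  exact ((hzU.and hzV).exists).elim (fun w hw => hw.2 hw.1)

private lemma locconst_of_hasFDerivAt_zero {E : Type*} [NormedAddCommGroup E]
    [NormedSpace ℝ E] {q : E → ℝ} {Ω : Set E} (hΩ : IsOpen Ω)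
    (h : ∀ x ∈ Ω, HasFDerivAt q (0 : E →L[ℝ] ℝ) x) :
    ∀ x ∈ Ω, ∀ᶠ y in nhds x, q y = q x := by
  intro x hx
  obtain ⟨ε, hε, hball⟩ := Metric.isOpen_iff.1 hΩ x hx
  filter_upwards [Metric.ball_mem_nhds x hε] with y hy
  exact (convex_ball x ε).is_const_of_fderivWithin_eq_zero
    (fun z hz => ((h z (hball hz)).differentiableAt).differentiableWithinAt)
    (fun z hz => (h z (hball hz)).hasFDerivWithinAt.fderivWithin
      (Metric.isOpen_ball.uniqueDiffWithinAt hz))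
    hy (Metric.mem_ball_self hε)


private lemma inner_fderiv_decomp {m n : ℕ}
    {φ : EuclideanSpace ℝ (Fin m) → EuclideanSpace ℝ (Fin n)}
    {lam : EuclideanSpace ℝ (Fin m) → ℝ} {x : EuclideanSpace ℝ (Fin m)}
    (hc : ∀ i j : Fin m,
      ⟪fderiv ℝ φ x (EuclideanSpace.single i 1),
        fderiv ℝ φ x (EuclideanSpace.single j 1)⟫ =
        lam x ^ 2 * (if i = j then 1 else 0))
    (v : EuclideanSpace ℝ (Fin m)) (k : Fin m) :
    ⟪fderiv ℝ φ x v, fderiv ℝ φ x (EuclideanSpace.single k 1)⟫ = lam x ^ 2 * v k := by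
  have hdec : fderiv ℝ φ x v
      = ∑ i : Fin m, v i • fderiv ℝ φ x (EuclideanSpace.single i (1:ℝ)) := by
    exact clm_decomp _ v
  rw [hdec, sum_inner]
  have : ∀ i : Fin m, ⟪v i • fderiv ℝ φ x (EuclideanSpace.single i (1:ℝ)),
      fderiv ℝ φ x (EuclideanSpace.single k 1)⟫
      = v i * (lam x ^ 2 * (if i = k then 1 else 0)) := by
    intro i
    rw [real_inner_smul_left, hc i k]
  rw [Finset.sum_congr rfl (fun i _ => this i)]
  simp [Finset.sum_ite_eq', mul_comm]

private lemma key_facts {m n : ℕ}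
    {Ω : Set (EuclideanSpace ℝ (Fin m))} (hΩ : IsOpen Ω)
    {φ : EuclideanSpace ℝ (Fin m) → EuclideanSpace ℝ (Fin n)}
    (hφ : ContDiffOn ℝ (⊤ : ℕ∞) φ Ω)
    {lam : EuclideanSpace ℝ (Fin m) → ℝ} (hlam : ContDiffOn ℝ (⊤ : ℕ∞) lam Ω)
    (hconf : ∀ x ∈ Ω, ∀ i j : Fin m,
      ⟪fderiv ℝ φ x (EuclideanSpace.single i 1),
        fderiv ℝ φ x (EuclideanSpace.single j 1)⟫ =
        lam x ^ 2 * (if i = j then 1 else 0))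
    {x : EuclideanSpace ℝ (Fin m)} (hx : x ∈ Ω) (k : Fin m) :
    ⟪lapV φ x, fderiv ℝ φ x (EuclideanSpace.single k 1)⟫
      = (2 - (m:ℝ)) * (lam x * fderiv ℝ lam x (EuclideanSpace.single k 1)) := by
  set e : Fin m → EuclideanSpace ℝ (Fin m) := fun i => EuclideanSpace.single i 1 with he
  have hmem : Ω ∈ nhds x := hΩ.mem_nhds hx
  have hev : ∀ᶠ y in nhds x, HasFDerivAt φ (fderiv ℝ φ y) y := by
    filter_upwards [hΩ.mem_nhds hx] with y hy
    exact ((hφ.contDiffAt (hΩ.mem_nhds hy)).differentiableAt (by simp)).hasFDerivAt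
  have hφx : ContDiffAt ℝ (⊤ : ℕ∞) φ x := hφ.contDiffAt hmem
  set F := fderiv ℝ (fderiv ℝ φ) x with hFdef
  have hF : HasFDerivAt (fderiv ℝ φ) F x :=
    ((hφx.fderiv_right (WithTop.coe_le_coe.mpr (le_top : (1 + 1 : ℕ∞) ≤ ⊤)) : ContDiffAt ℝ 1 (fderiv ℝ φ) x).differentiableAt one_ne_zero).hasFDerivAt
  have Fsymm : ∀ v w, F v w = F w v := fun v w =>
    second_derivative_symmetric_of_eventually hev hF v w
  have hg : ∀ i : Fin m, HasFDerivAt (fun y => fderiv ℝ φ y (e i))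
      ((ContinuousLinearMap.apply ℝ (EuclideanSpace ℝ (Fin n)) (e i)).comp F) x := by
    intro i
    exact ((ContinuousLinearMap.apply ℝ (EuclideanSpace ℝ (Fin n)) (e i)).hasFDerivAt).comp x hF
  have hTl : HasFDerivAt lam (fderiv ℝ lam x) x :=
    ((hlam.contDiffAt hmem).differentiableAt (by simp)).hasFDerivAt
  set L : Fin m → ℝ := fun i => fderiv ℝ lam x (e i) with hL
  -- the differentiated conformality relation
  have hkey : ∀ i j kk : Fin m,
      ⟪fderiv ℝ φ x (e i), F (e kk) (e j)⟫ + ⟪F (e kk) (e i), fderiv ℝ φ x (e j)⟫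
        = (if i = j then (1:ℝ) else 0) * (2 * lam x * L kk) := by
    intro i j kk
    have h1 := (hg i).inner (𝕜 := ℝ) (hg j)
    have hQ : HasFDerivAt (fun y => lam y ^ 2 * (if i = j then (1:ℝ) else 0))
        ((if i = j then (1:ℝ) else 0) • (((2:ℝ) * lam x ^ 1) • fderiv ℝ lam x)) x := by
      have := (hasFDerivAt_npow hTl 2).mul_const (if i = j then (1:ℝ) else 0)
      exact this.congr_fderiv (by norm_num)
    have heq : (fun y => (⟪fderiv ℝ φ y (e i), fderiv ℝ φ y (e j)⟫ : ℝ))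
        =ᶠ[nhds x] fun y => lam y ^ 2 * (if i = j then (1:ℝ) else 0) := by
      filter_upwards [hmem] with y hy
      exact hconf y hy i j
    have h2 := hQ.congr_of_eventuallyEq heq
    have huniq := h1.unique h2
    have happ := congrArg (fun (T : EuclideanSpace ℝ (Fin m) →L[ℝ] ℝ) => T (e kk)) huniq
    simp only [ContinuousLinearMap.comp_apply, ContinuousLinearMap.prod_apply,
      ContinuousLinearMap.apply_apply, fderivInnerCLM_apply,
      ContinuousLinearMap.smul_apply, smul_eq_mul] at happ
    rw [happ]
    ring
  -- Laplacian as sum of second derivatives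
  have hlap : lapV φ x = ∑ i : Fin m, F (e i) (e i) := by
    unfold lapV
    refine Finset.sum_congr rfl (fun i _ => ?_)
    have : fderiv ℝ (fun y => fderiv ℝ φ y (e i)) x
        = (ContinuousLinearMap.apply ℝ (EuclideanSpace ℝ (Fin n)) (e i)).comp F :=
      (hg i).fderiv
    rw [show (EuclideanSpace.single i (1:ℝ)) = e i from rfl, this]
    rfl
  have hterm : ∀ i : Fin m, ⟪F (e i) (e i), fderiv ℝ φ x (e k)⟫
      = (if i = k then (2 * lam x * L i) else 0) - lam x * L k := by
    intro i
    have h1 := hkey i k i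
    have h2 := hkey i i k
    rw [if_pos rfl, one_mul] at h2
    rw [show F (e i) (e k) = F (e k) (e i) from Fsymm _ _] at h1
    rw [ite_mul, zero_mul, one_mul] at h1
    have hcomm : (⟪fderiv ℝ φ x (e i), F (e k) (e i)⟫ : ℝ)
        = ⟪F (e k) (e i), fderiv ℝ φ x (e i)⟫ := real_inner_comm _ _
    linarith [h1, h2, hcomm]
  rw [hlap, sum_inner, Finset.sum_congr rfl (fun i _ => hterm i)]
  rw [Finset.sum_sub_distrib, Finset.sum_ite_eq' Finset.univ k (fun i => 2 * lam x * L i)]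
  simp only [Finset.mem_univ, if_pos, Finset.sum_const, Finset.card_univ, Fintype.card_fin,
    nsmul_eq_mul]
  ring

private lemma gradco {m : ℕ} (f : EuclideanSpace ℝ (Fin m) → ℝ)
    (w : EuclideanSpace ℝ (Fin m)) (k : Fin m) :
    (gradient f w) k = fderiv ℝ f w (EuclideanSpace.single k 1) := by
  have h : ⟪gradient f w, EuclideanSpace.single k (1:ℝ)⟫
      = fderiv ℝ f w (EuclideanSpace.single k 1) := InnerProductSpace.toDual_symm_apply
  rw [EuclideanSpace.inner_single_right] at h
  simpa using h

theorem stmt5 {m n : ℕ} (hm : 2 ≤ m) (hn : m ≤ n)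
    (Ω : Set (EuclideanSpace ℝ (Fin m))) (hΩ : IsOpen Ω) (hΩc : IsConnected Ω)
    (f : EuclideanSpace ℝ (Fin m) → ℝ) (hf : ContDiffOn ℝ (⊤ : ℕ∞) f Ω)
    (hfpos : ∀ x ∈ Ω, 0 < f x)
    (φ : EuclideanSpace ℝ (Fin m) → EuclideanSpace ℝ (Fin n))
    (hφ : ContDiffOn ℝ (⊤ : ℕ∞) φ Ω)
    (lam : EuclideanSpace ℝ (Fin m) → ℝ) (hlam : ContDiffOn ℝ (⊤ : ℕ∞) lam Ω)
    (hlampos : ∀ x ∈ Ω, 0 < lam x)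
    -- `φ` is a conformal immersion with conformal factor `lam`
    (hconf : ∀ x ∈ Ω, ∀ i j : Fin m,
      ⟪fderiv ℝ φ x (EuclideanSpace.single i 1),
        fderiv ℝ φ x (EuclideanSpace.single j 1)⟫ =
        lam x ^ 2 * (if i = j then 1 else 0)) :
    -- `φ` is `f`-harmonic iff it is a minimal immersion and `f = C • lam ^ (m - 2)`
    (∀ x ∈ Ω, f x • lapV φ x + fderiv ℝ φ x (gradient f x) = 0) ↔
      ((∀ x ∈ Ω, ∃ v : EuclideanSpace ℝ (Fin m), fderiv ℝ φ x v = lapV φ x) ∧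
        ∃ C : ℝ, 0 < C ∧ ∀ x ∈ Ω, f x = C * lam x ^ (m - 2)) := by
  have hp2 : ((m:ℝ) - 2) = ((m - 2 : ℕ) : ℝ) := by
    rw [Nat.cast_sub hm]; norm_num
  set p := m - 2 with hpdef
  constructor
  · intro H
    have hPDE : ∀ x ∈ Ω, ∀ k : Fin m,
        lam x ^ 2 * fderiv ℝ f x (EuclideanSpace.single k 1)
          = ((m:ℝ) - 2) * (f x * (lam x * fderiv ℝ lam x (EuclideanSpace.single k 1))) := by
      intro x hx k
      have h0 := congrArg
        (fun z : EuclideanSpace ℝ (Fin n) =>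
          (⟪z, fderiv ℝ φ x (EuclideanSpace.single k 1)⟫ : ℝ)) (H x hx)
      simp only [inner_add_left, real_inner_smul_left, inner_zero_left] at h0
      rw [key_facts hΩ hφ hlam hconf hx k,
        inner_fderiv_decomp (hconf x hx) (gradient f x) k, gradco f x k] at h0
      linear_combination h0
    refine ⟨?_, ?_⟩
    · intro x hx
      refine ⟨(-(f x)⁻¹) • gradient f x, ?_⟩
      have h0 := H x hx
      have hfx : f x ≠ 0 := (hfpos x hx).ne'
      have h1 : fderiv ℝ φ x (gradient f x) = -(f x • lapV φ x) :=
        eq_neg_of_add_eq_zero_right h0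
      rw [map_smul, h1, smul_neg, smul_smul, neg_mul, neg_smul, neg_neg, inv_mul_cancel₀ hfx, one_smul]
    · have hx₀ : hΩc.nonempty.choose ∈ Ω := hΩc.nonempty.choose_spec
      set x₀ := hΩc.nonempty.choose with hx₀def
      set q : EuclideanSpace ℝ (Fin m) → ℝ :=
        fun y => Real.log (f y) - (p : ℝ) * Real.log (lam y) with hq
      have hq0 : ∀ x ∈ Ω, HasFDerivAt q (0 : EuclideanSpace ℝ (Fin m) →L[ℝ] ℝ) x := by
        intro x hx
        have hmem := hΩ.mem_nhds hx
        have hTf : HasFDerivAt f (fderiv ℝ f x) x :=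
          ((hf.contDiffAt hmem).differentiableAt (by simp)).hasFDerivAt
        have hTl : HasFDerivAt lam (fderiv ℝ lam x) x :=
          ((hlam.contDiffAt hmem).differentiableAt (by simp)).hasFDerivAt
        have h1 := (hTf.log (hfpos x hx).ne').sub
          ((hTl.log (hlampos x hx).ne').const_mul (p:ℝ))
        have hz : (f x)⁻¹ • fderiv ℝ f x - (p:ℝ) • ((lam x)⁻¹ • fderiv ℝ lam x) = 0 := by
          apply clm_ext_zero
          intro i
          have hpde := hPDE x hx i
          have hl0 : lam x ≠ 0 := (hlampos x hx).ne'
          have hfx : f x ≠ 0 := (hfpos x hx).ne'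
          have key2 : lam x * fderiv ℝ f x (EuclideanSpace.single i 1)
              = ((m:ℝ) - 2) * (f x * fderiv ℝ lam x (EuclideanSpace.single i 1)) := by
            apply mul_left_cancel₀ hl0
            linear_combination hpde
          simp only [ContinuousLinearMap.sub_apply, ContinuousLinearMap.smul_apply,
            ContinuousLinearMap.zero_apply, smul_eq_mul]
          rw [← hp2]
          field_simp
          linear_combination key2
        rw [hz] at h1
        exact h1
      have hconst := const_of_locally_const hΩc.isPreconnected
        (locconst_of_hasFDerivAt_zero hΩ hq0) hx₀
      refine ⟨Real.exp (q x₀), Real.exp_pos _, ?_⟩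
      intro x hx
      have h1 : q x = q x₀ := hconst x hx
      have hfx := hfpos x hx
      have hlx := hlampos x hx
      have h2 : f x = Real.exp (q x) * lam x ^ p := by
        rw [hq]
        simp only
        rw [Real.exp_sub, Real.exp_log hfx, Real.exp_nat_mul, Real.exp_log hlx]
        field_simp
      rw [h2, h1]
  · rintro ⟨hmin, C, hC, hfC⟩ x hx
    obtain ⟨v, hv⟩ := hmin x hx
    have hmem := hΩ.mem_nhds hx
    have hl0 : lam x ≠ 0 := (hlampos x hx).ne'
    have hTl : HasFDerivAt lam (fderiv ℝ lam x) x :=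
      ((hlam.contDiffAt hmem).differentiableAt (by simp)).hasFDerivAt
    have hfd : HasFDerivAt f
        (C • (((p:ℝ) * lam x ^ (p-1)) • fderiv ℝ lam x)) x := by
      have h1 := (hasFDerivAt_npow hTl p).const_mul C
      apply h1.congr_of_eventuallyEq
      filter_upwards [hmem] with y hy
      exact hfC y hy
    have hvk : ∀ k : Fin m, lam x ^ 2 * v k
        = (2 - (m:ℝ)) * (lam x * fderiv ℝ lam x (EuclideanSpace.single k 1)) := by
      intro k
      rw [← inner_fderiv_decomp (hconf x hx) v k, hv,
        key_facts hΩ hφ hlam hconf hx k]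
    rw [← hv, ← map_smul, ← map_add]
    suffices h : f x • v + gradient f x = 0 by rw [h, map_zero]
    ext k
    have hlv : lam x * v k
        = -(p:ℝ) * fderiv ℝ lam x (EuclideanSpace.single k 1) := by
      apply mul_left_cancel₀ hl0
      linear_combination hvk k
        - (lam x * fderiv ℝ lam x (EuclideanSpace.single k 1)) * hp2
    have hgk : (gradient f x) k
        = C * ((p:ℝ) * lam x ^ (p-1) * fderiv ℝ lam x (EuclideanSpace.single k 1)) := by
      rw [gradco f x k, hfd.fderiv]
      simp [mul_assoc]
    simp only [PiLp.add_apply, PiLp.smul_apply, PiLp.zero_apply, smul_eq_mul]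
    rw [hgk, hfC x hx]
    rcases Nat.eq_zero_or_pos p with hp | hp
    · have hv0 : v k = 0 := by
        have := hlv
        rw [hp] at this
        simp at this
        rcases this with h | h
        · exact absurd h hl0
        · exact h
      rw [hp, hv0]
      simp
    · have hpow : lam x ^ p = lam x ^ (p-1) * lam x := by
        rw [← pow_succ]; congr 1; omega
      rw [hpow]
      linear_combination (C * lam x ^ (p-1)) * hlv
end

section
/- Let m, n, l ≥ 1, let Ω ⊆ ℝ^m be open, and let f : Ω → (0,∞) be smooth. Suppose φ = (φ¹,…,φⁿ) : Ω → ℝ^n is a smooth map that is horizontally weakly conformal with dilation λ : Ω → [0,∞) (i.e., ⟨∇φ^α, ∇φ^β⟩ = λ²·δ^{αβ} for all 1 ≤ α, β ≤ n) and is an f-harmonic map (f·Δφ^α + ⟨∇f, ∇φ^α⟩ = 0 for all α). Suppose ψ = (ψ¹,…,ψ^l) : ℝ^n → ℝ^l is a C² harmonic map, i.e., Δψ^σ = 0 on ℝ^n for every σ. Then the composition ψ∘φ : Ω → ℝ^l is an f-harmonic map: f·Δ(ψ∘φ)^σ + ⟨∇f, ∇(ψ∘φ)^σ⟩ = 0 on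 Ω for every σ. -/
open scoped RealInnerProductSpace

/-- The Euclidean Laplacian of a real-valued function on `ℝ^m`. -/
noncomputable def lap {m : ℕ} (u : EuclideanSpace ℝ (Fin m) → ℝ)
    (x : EuclideanSpace ℝ (Fin m)) : ℝ :=
  ∑ i : Fin m, fderiv ℝ (fun y => fderiv ℝ u y (EuclideanSpace.single i 1)) x
    (EuclideanSpace.single i 1)

lemma clm_sum {n : ℕ} (L : EuclideanSpace ℝ (Fin n) →L[ℝ] ℝ) (w : EuclideanSpace ℝ (Fin n)) :
    L w = ∑ α, w α * L (EuclideanSpace.single α 1) := by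
  have hw : ∑ α, w α • EuclideanSpace.single α (1:ℝ) = w := by
    have := (EuclideanSpace.basisFun (Fin n) ℝ).sum_repr w
    simpa [EuclideanSpace.basisFun_apply, EuclideanSpace.basisFun_repr] using this
  conv_lhs => rw [← hw]
  simp [map_sum]

lemma proj_fderiv {m n : ℕ} (φ : EuclideanSpace ℝ (Fin m) → EuclideanSpace ℝ (Fin n))
    (x : EuclideanSpace ℝ (Fin m)) (hφ : DifferentiableAt ℝ φ x) (α : Fin n)
    (v : EuclideanSpace ℝ (Fin m)) :
    fderiv ℝ (fun y => φ y α) x v = fderiv ℝ φ x v α := by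
  have hd : DifferentiableAt ℝ (⇑(EuclideanSpace.proj (𝕜 := ℝ) α)) (φ x) :=
    (EuclideanSpace.proj (𝕜 := ℝ) α).differentiableAt
  have h := fderiv_comp x hd hφ
  have h2 : fderiv ℝ (fun y => φ y α) x = fderiv ℝ (⇑(EuclideanSpace.proj (𝕜 := ℝ) α) ∘ φ) x := rfl
  rw [h2, h]
  rw [ContinuousLinearMap.comp_apply, ContinuousLinearMap.fderiv]; rfl

lemma chainpt {m n : ℕ} (φ : EuclideanSpace ℝ (Fin m) → EuclideanSpace ℝ (Fin n))
    (g : EuclideanSpace ℝ (Fin n) → ℝ) (x : EuclideanSpace ℝ (Fin m))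
    (hφ : DifferentiableAt ℝ φ x) (hg : DifferentiableAt ℝ g (φ x))
    (v : EuclideanSpace ℝ (Fin m)) :
    fderiv ℝ (fun y => g (φ y)) x v =
      ∑ α, fderiv ℝ g (φ x) (EuclideanSpace.single α 1) * fderiv ℝ (fun y => φ y α) x v := by
  have h := fderiv_comp x hg hφ
  have h1 : fderiv ℝ (fun y => g (φ y)) x v = fderiv ℝ g (φ x) (fderiv ℝ φ x v) := by
    rw [show (fun y => g (φ y)) = g ∘ φ from rfl, h]; rfl
  rw [h1, clm_sum]
  exact Finset.sum_congr rfl fun α _ => by rw [proj_fderiv φ x hφ α v, mul_comm]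

lemma inner_gradient {m : ℕ} (f : EuclideanSpace ℝ (Fin m) → ℝ) (x v : EuclideanSpace ℝ (Fin m)) :
    ⟪gradient f x, v⟫ = fderiv ℝ f x v := by
  rw [gradient, ← InnerProductSpace.toDual_apply_apply, LinearIsometryEquiv.apply_symm_apply]

lemma grad_apply {m : ℕ} (f : EuclideanSpace ℝ (Fin m) → ℝ) (x : EuclideanSpace ℝ (Fin m))
    (i : Fin m) : gradient f x i = fderiv ℝ f x (EuclideanSpace.single i 1) := by
  have := inner_gradient f x (EuclideanSpace.single i 1)
  rw [EuclideanSpace.inner_single_right] at this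
  simpa using this

lemma inner_grad_grad {m : ℕ} (a b : EuclideanSpace ℝ (Fin m) → ℝ)
    (x : EuclideanSpace ℝ (Fin m)) :
    ⟪gradient a x, gradient b x⟫ =
      ∑ i, fderiv ℝ a x (EuclideanSpace.single i 1) * fderiv ℝ b x (EuclideanSpace.single i 1) := by
  rw [PiLp.inner_apply]
  exact Finset.sum_congr rfl fun i _ => by
    rw [grad_apply, grad_apply]; simp; ring

theorem stmt8 {m n l : ℕ} (hm : 1 ≤ m) (hn : 1 ≤ n) (hl : 1 ≤ l)
    (Ω : Set (EuclideanSpace ℝ (Fin m))) (hΩ : IsOpen Ω)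
    (f : EuclideanSpace ℝ (Fin m) → ℝ) (hf : ContDiffOn ℝ (⊤ : ℕ∞) f Ω)
    (hfpos : ∀ x ∈ Ω, 0 < f x)
    (φ : EuclideanSpace ℝ (Fin m) → EuclideanSpace ℝ (Fin n))
    (hφ : ContDiffOn ℝ (⊤ : ℕ∞) φ Ω)
    (lam : EuclideanSpace ℝ (Fin m) → ℝ) (hlam : ∀ x ∈ Ω, 0 ≤ lam x)
    -- `φ` is horizontally weakly conformal with dilation `lam`
    (hconf : ∀ x ∈ Ω, ∀ α β : Fin n,
      ⟪gradient (fun y => φ y α) x, gradient (fun y => φ y β) x⟫ =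
        lam x ^ 2 * (if α = β then 1 else 0))
    -- `φ` is an `f`-harmonic map
    (hfh : ∀ α : Fin n, ∀ x ∈ Ω,
      f x * lap (fun y => φ y α) x +
        ⟪gradient f x, gradient (fun y => φ y α) x⟫ = 0)
    (ψ : EuclideanSpace ℝ (Fin n) → EuclideanSpace ℝ (Fin l))
    (hψ : ContDiff ℝ 2 ψ)
    -- `ψ` is a harmonic map
    (hψh : ∀ σ : Fin l, ∀ y, lap (fun z => ψ z σ) y = 0) :
    -- the composition `ψ ∘ φ` is an `f`-harmonic map
    ∀ σ : Fin l, ∀ x ∈ Ω,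
      f x * lap (fun y => ψ (φ y) σ) x +
        ⟪gradient f x, gradient (fun y => ψ (φ y) σ) x⟫ = 0 := by
  intro σ x hx
  have hψσ : ContDiff ℝ 2 (fun z => ψ z σ) := by
    have h0 : (fun z => ψ z σ) =
        fun z => (EuclideanSpace.proj (𝕜 := ℝ) σ) (ψ z) := rfl
    rw [h0]
    exact (EuclideanSpace.proj (𝕜 := ℝ) σ).contDiff.comp hψ
  have hψσ1 : Differentiable ℝ (fun z => ψ z σ) := hψσ.differentiable two_ne_zero
  -- the partial derivatives of ψσ
  have hgC : ∀ α : Fin n, Differentiable ℝ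
      (fun z => fderiv ℝ (fun w => ψ w σ) z (EuclideanSpace.single α 1)) := by
    intro α
    have h1 : ContDiff ℝ 1 (fderiv ℝ (fun w => ψ w σ)) :=
      hψσ.fderiv_right (by norm_num)
    exact fun z => ((h1.differentiable one_ne_zero) z).clm_apply (differentiableAt_const _)
  have hφat : ∀ y ∈ Ω, ContDiffAt ℝ (⊤ : ℕ∞) φ y := fun y hy => hφ.contDiffAt (hΩ.mem_nhds hy)
  have hφd : ∀ y ∈ Ω, DifferentiableAt ℝ φ y :=
    fun y hy => (hφat y hy).differentiableAt (by simp)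
  have hφαat : ∀ (α : Fin n) (y), y ∈ Ω → ContDiffAt ℝ (⊤ : ℕ∞) (fun w => φ w α) y := by
    intro α y hy
    exact ((EuclideanSpace.proj (𝕜 := ℝ) α).contDiff.contDiffAt).comp y (hφat y hy)
  -- first derivative formula on Ω
  have hF1 : ∀ y ∈ Ω, ∀ v, fderiv ℝ (fun w => ψ (φ w) σ) y v =
      ∑ α, fderiv ℝ (fun w => ψ w σ) (φ y) (EuclideanSpace.single α 1) *
        fderiv ℝ (fun w => φ w α) y v :=
    fun y hy v => chainpt φ (fun z => ψ z σ) y (hφd y hy) (hψσ1 (φ y)) v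
  -- second derivative formula at x
  have key_i : ∀ i : Fin m,
      fderiv ℝ (fun y => fderiv ℝ (fun w => ψ (φ w) σ) y (EuclideanSpace.single i 1)) x
        (EuclideanSpace.single i 1)
      = ∑ α, ((∑ β, fderiv ℝ (fun z => fderiv ℝ (fun w => ψ w σ) z (EuclideanSpace.single α 1))
            (φ x) (EuclideanSpace.single β 1) *
            fderiv ℝ (fun w => φ w β) x (EuclideanSpace.single i 1)) *
          fderiv ℝ (fun w => φ w α) x (EuclideanSpace.single i 1)
        + fderiv ℝ (fun w => ψ w σ) (φ x) (EuclideanSpace.single α 1) *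
          fderiv ℝ (fun y => fderiv ℝ (fun w => φ w α) y (EuclideanSpace.single i 1)) x
            (EuclideanSpace.single i 1)) := by
    intro i
    have hev : (fun y => fderiv ℝ (fun w => ψ (φ w) σ) y (EuclideanSpace.single i 1)) =ᶠ[nhds x]
        (fun y => ∑ α, fderiv ℝ (fun w => ψ w σ) (φ y) (EuclideanSpace.single α 1) *
          fderiv ℝ (fun w => φ w α) y (EuclideanSpace.single i 1)) := by
      filter_upwards [hΩ.mem_nhds hx] with y hy
      exact hF1 y hy _
    rw [hev.fderiv_eq]
    have hdiffA : ∀ α : Fin n, DifferentiableAt ℝ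
        (fun y => fderiv ℝ (fun w => ψ w σ) (φ y) (EuclideanSpace.single α 1)) x :=
      fun α => ((hgC α) (φ x)).comp x (hφd x hx)
    have hdiffB : ∀ α : Fin n, DifferentiableAt ℝ
        (fun y => fderiv ℝ (fun w => φ w α) y (EuclideanSpace.single i 1)) x := by
      intro α
      have h1 : ContDiffAt ℝ 1 (fderiv ℝ (fun w => φ w α)) x :=
        (hφαat α x hx).fderiv_right (by exact WithTop.coe_le_coe.mpr (le_top : ((1 + 1 : ℕ) : ℕ∞) ≤ ⊤))
      exact (h1.differentiableAt one_ne_zero).clm_apply (differentiableAt_const _)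
    rw [fderiv_fun_sum (fun α _ => ((hdiffA α).fun_mul (hdiffB α))), ContinuousLinearMap.sum_apply]
    refine Finset.sum_congr rfl fun α _ => ?_
    rw [fderiv_fun_mul (hdiffA α) (hdiffB α)]
    simp only [ContinuousLinearMap.add_apply, ContinuousLinearMap.smul_apply, smul_eq_mul]
    have hch := chainpt φ
      (fun z => fderiv ℝ (fun w => ψ w σ) z (EuclideanSpace.single α 1)) x
      (hφd x hx) ((hgC α) (φ x)) (EuclideanSpace.single i 1)
    rw [hch]
    ring
  -- the conformality sums
  have hSig : ∀ α β : Fin n,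
      (∑ i : Fin m, fderiv ℝ (fun w => φ w β) x (EuclideanSpace.single i 1) *
        fderiv ℝ (fun w => φ w α) x (EuclideanSpace.single i 1)) =
      lam x ^ 2 * (if α = β then 1 else 0) := by
    intro α β
    have h := hconf x hx β α
    rw [inner_grad_grad] at h
    rw [h]
    congr 1
    simp [eq_comm]
  -- the Laplacian of the composition
  have hlap : lap (fun w => ψ (φ w) σ) x =
      ∑ α, fderiv ℝ (fun w => ψ w σ) (φ x) (EuclideanSpace.single α 1) *
        lap (fun w => φ w α) x := by
    have h1 : lap (fun w => ψ (φ w) σ) x = ∑ i : Fin m, ∑ α,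
        ((∑ β, fderiv ℝ (fun z => fderiv ℝ (fun w => ψ w σ) z (EuclideanSpace.single α 1))
            (φ x) (EuclideanSpace.single β 1) *
            fderiv ℝ (fun w => φ w β) x (EuclideanSpace.single i 1)) *
          fderiv ℝ (fun w => φ w α) x (EuclideanSpace.single i 1)
        + fderiv ℝ (fun w => ψ w σ) (φ x) (EuclideanSpace.single α 1) *
          fderiv ℝ (fun y => fderiv ℝ (fun w => φ w α) y (EuclideanSpace.single i 1)) x
            (EuclideanSpace.single i 1)) :=
      Finset.sum_congr rfl fun i _ => key_i i
    rw [h1, Finset.sum_comm]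
    have h2 : ∀ α : Fin n, (∑ i : Fin m,
        ((∑ β, fderiv ℝ (fun z => fderiv ℝ (fun w => ψ w σ) z (EuclideanSpace.single α 1))
            (φ x) (EuclideanSpace.single β 1) *
            fderiv ℝ (fun w => φ w β) x (EuclideanSpace.single i 1)) *
          fderiv ℝ (fun w => φ w α) x (EuclideanSpace.single i 1)
        + fderiv ℝ (fun w => ψ w σ) (φ x) (EuclideanSpace.single α 1) *
          fderiv ℝ (fun y => fderiv ℝ (fun w => φ w α) y (EuclideanSpace.single i 1)) x
            (EuclideanSpace.single i 1)))
        = lam x ^ 2 * (if α = α then 1 else 0) *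
            fderiv ℝ (fun z => fderiv ℝ (fun w => ψ w σ) z (EuclideanSpace.single α 1))
              (φ x) (EuclideanSpace.single α 1)
          + fderiv ℝ (fun w => ψ w σ) (φ x) (EuclideanSpace.single α 1) *
            lap (fun w => φ w α) x := by
      intro α
      rw [Finset.sum_add_distrib]
      congr 1
      · -- first part
        have : ∀ i : Fin m,
            (∑ β, fderiv ℝ (fun z => fderiv ℝ (fun w => ψ w σ) z (EuclideanSpace.single α 1))
              (φ x) (EuclideanSpace.single β 1) *
              fderiv ℝ (fun w => φ w β) x (EuclideanSpace.single i 1)) *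
            fderiv ℝ (fun w => φ w α) x (EuclideanSpace.single i 1)
            = ∑ β, fderiv ℝ (fun z => fderiv ℝ (fun w => ψ w σ) z (EuclideanSpace.single α 1))
              (φ x) (EuclideanSpace.single β 1) *
              (fderiv ℝ (fun w => φ w β) x (EuclideanSpace.single i 1) *
               fderiv ℝ (fun w => φ w α) x (EuclideanSpace.single i 1)) := by
          intro i
          rw [Finset.sum_mul]
          exact Finset.sum_congr rfl fun β _ => by ring
        rw [Finset.sum_congr rfl fun i _ => this i, Finset.sum_comm]
        have h3 : ∀ β : Fin n, (∑ i : Fin m,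
            fderiv ℝ (fun z => fderiv ℝ (fun w => ψ w σ) z (EuclideanSpace.single α 1))
              (φ x) (EuclideanSpace.single β 1) *
              (fderiv ℝ (fun w => φ w β) x (EuclideanSpace.single i 1) *
               fderiv ℝ (fun w => φ w α) x (EuclideanSpace.single i 1)))
            = fderiv ℝ (fun z => fderiv ℝ (fun w => ψ w σ) z (EuclideanSpace.single α 1))
              (φ x) (EuclideanSpace.single β 1) * (lam x ^ 2 * (if α = β then 1 else 0)) := by
          intro β
          rw [← Finset.mul_sum, hSig α β]
        rw [Finset.sum_congr rfl fun β _ => h3 β]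
        rw [Finset.sum_eq_single α]
        · ring
        · intro β _ hβ
          simp [Ne.symm hβ]
        · intro h; exact absurd (Finset.mem_univ α) h
      · rw [← Finset.mul_sum]
        rfl
    rw [Finset.sum_congr rfl fun α _ => h2 α, Finset.sum_add_distrib]
    have h4 : (∑ α : Fin n, lam x ^ 2 * (if α = α then 1 else 0) *
        fderiv ℝ (fun z => fderiv ℝ (fun w => ψ w σ) z (EuclideanSpace.single α 1))
          (φ x) (EuclideanSpace.single α 1)) = lam x ^ 2 * lap (fun z => ψ z σ) (φ x) := by
      rw [lap, Finset.mul_sum]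
      exact Finset.sum_congr rfl fun α _ => by simp [mul_assoc]
    rw [h4, hψh σ (φ x), mul_zero, zero_add]
  -- the gradient term
  have hgradterm : ⟪gradient f x, gradient (fun w => ψ (φ w) σ) x⟫ =
      ∑ α, fderiv ℝ (fun w => ψ w σ) (φ x) (EuclideanSpace.single α 1) *
        ⟪gradient f x, gradient (fun w => φ w α) x⟫ := by
    rw [real_inner_comm, inner_gradient, hF1 x hx (gradient f x)]
    refine Finset.sum_congr rfl fun α _ => ?_
    congr 1
    rw [real_inner_comm]
    exact (inner_gradient _ _ _).symm
  rw [hlap, hgradterm, Finset.mul_sum, ← Finset.sum_add_distrib]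
  rw [show (∑ α : Fin n, (f x * (fderiv ℝ (fun w => ψ w σ) (φ x) (EuclideanSpace.single α 1) *
      lap (fun w => φ w α) x) +
      fderiv ℝ (fun w => ψ w σ) (φ x) (EuclideanSpace.single α 1) *
        ⟪gradient f x, gradient (fun w => φ w α) x⟫))
    = ∑ α : Fin n, fderiv ℝ (fun w => ψ w σ) (φ x) (EuclideanSpace.single α 1) *
      (f x * lap (fun w => φ w α) x + ⟪gradient f x, gradient (fun w => φ w α) x⟫)
    from Finset.sum_congr rfl fun α _ => by ring]
  rw [Finset.sum_eq_zero]
  intro α _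
  rw [hfh α x hx, mul_zero]
end
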